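/- arXiv:1110.6794 — 6 statements merged into one kernel-verified Lean document; each statement's English description precedes it below -/
import Mathlib

section
/- Under the conditions |a|<l and r>r₊>0 with Δ₋(r)>0, one has the estimate (r−r₊)(r+r₊)(r²−r₊²)/Δ₋(r) ≤ l². -/
/-- Δ₋(r) for the Kerr-AdS spacetime with parameters (M, a, l). -/
noncomputable def Dm (M l a r : ℝ) : ℝ := (r^2 + a^2) * (1 + r^2/l^2) - 2*M*r

/-!
Eliminating `M` with the root equation gives `l² r₊ Δ₋(x) = (x - r₊) Q(x)` for an explicit cubic `Q`.
Since `Q(r₊ + l²/r₊) > 0`, a negative `Q(r₊)` would give a zero of `Q`, hence of `Δ₋`, beyond `r₊`;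
so `Q(r₊) ≥ 0` by maximality of `r₊`. Then for `r ≥ r₊`,
`Q(r) - r₊(r - r₊)(r + r₊)² = r₊(2r₊² + a² + l²)(r - r₊) + Q(r₊) ≥ 0`.
-/

/-- `r₊` times the cubic `x³ + x²r₊ + x(r₊² + a² + l²) - a²l²/r₊` of the factorization of `l² Δ₋`,
so that no division occurs. -/
def cubicFactor (l a rp x : ℝ) : ℝ :=
  rp * x^3 + rp^2 * x^2 + rp * (rp^2 + a^2 + l^2) * x - a^2 * l^2

theorem cubicFactor_eq (l a rp x : ℝ) :
    cubicFactor l a rp x =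
      rp * (x - rp) * (x + rp)^2 + rp * (2 * rp^2 + a^2 + l^2) * (x - rp) + cubicFactor l a rp rp := by
  unfold cubicFactor
  ring

theorem mul_Dm_eq_mul_cubicFactor {M l a rp : ℝ} (hl : l ≠ 0) (hroot : Dm M l a rp = 0) (x : ℝ) :
    l^2 * rp * Dm M l a x = (x - rp) * cubicFactor l a rp x := by
  have hM : 2 * M * rp * l^2 = (rp^2 + a^2) * (l^2 + rp^2) := by
    unfold Dm at hroot
    field_simp at hroot
    linear_combination -hroot
  unfold Dm cubicFactor
  field_simp
  linear_combination (-x) * hM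

theorem cubicFactor_self_nonneg {M l a rp : ℝ} (hl : l ≠ 0) (hrp : 0 < rp)
    (hroot : Dm M l a rp = 0) (hlargest : ∀ s : ℝ, Dm M l a s = 0 → s ≤ rp) :
    0 ≤ cubicFactor l a rp rp := by
  by_contra! hneg
  set X := rp + l^2 / rp
  have hrpX : rp ≤ X := le_add_of_nonneg_right (by positivity)
  have hX : 0 < cubicFactor l a rp X := by
    have hrpX' : l^2 ≤ rp * X := by
      simp only [X, mul_add, mul_div_cancel₀ _ hrp.ne']
      exact le_add_of_nonneg_left (mul_self_nonneg rp)
    have hXpos : 0 < X := hrp.trans_le hrpX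
    unfold cubicFactor
    nlinarith [pow_pos hXpos 3, pow_pos hXpos 2,
      mul_le_mul_of_nonneg_left hrpX' (by positivity : (0 : ℝ) ≤ rp^2 + a^2 + l^2)]
  have hcont : ContinuousOn (cubicFactor l a rp) (Set.Icc rp X) := by
    unfold cubicFactor
    fun_prop
  obtain ⟨s, ⟨hrps, -⟩, hs⟩ := intermediate_value_Icc hrpX hcont ⟨hneg.le, hX.le⟩
  have hrps' : rp < s := hrps.lt_of_ne (by rintro rfl; exact hneg.ne hs)
  have hDs : Dm M l a s = 0 := by
    have h := mul_Dm_eq_mul_cubicFactor hl hroot s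
    rw [hs, mul_zero] at h
    simpa [hl, hrp.ne'] using h
  exact hrps'.not_ge (hlargest s hDs)

theorem stmt_1_general (M l a rp : ℝ) (hl : 0 < l)
    (hrp : 0 < rp) (hroot : Dm M l a rp = 0)
    (hlargest : ∀ s : ℝ, Dm M l a s = 0 → s ≤ rp) :
    ∀ r : ℝ, rp ≤ r →
      (r - rp) * (r + rp) * (r^2 - rp^2) ≤ l^2 * Dm M l a r := by
  intro r hr
  have hQ := cubicFactor_self_nonneg hl.ne' hrp hroot hlargest
  have hfac := mul_Dm_eq_mul_cubicFactor hl.ne' hroot r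
  have hsub : 0 ≤ r - rp := sub_nonneg.mpr hr
  refine le_of_mul_le_mul_left ?_ hrp
  calc rp * ((r - rp) * (r + rp) * (r^2 - rp^2))
      = (r - rp) * (rp * (r - rp) * (r + rp)^2) := by ring
    _ ≤ (r - rp) * cubicFactor l a rp r := by
        rw [cubicFactor_eq l a rp r]
        gcongr
        have : 0 ≤ rp * (2 * rp^2 + a^2 + l^2) * (r - rp) := by positivity
        linarith
    _ = rp * (l^2 * Dm M l a r) := by rw [← hfac]; ring

/-- the estimate (r−r₊)(r+r₊)(r²−r₊²) ≤ l² Δ₋(r) for r ≥ r₊. -/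
theorem stmt_1 (M l a rp : ℝ) (hM : 0 < M) (hl : 0 < l) (ha : |a| < l)
    (hrp : 0 < rp) (hroot : Dm M l a rp = 0)
    (hlargest : ∀ s : ℝ, Dm M l a s = 0 → s ≤ rp) :
    ∀ r : ℝ, rp ≤ r →
      (r - rp) * (r + rp) * (r^2 - rp^2) ≤ l^2 * Dm M l a r :=
  stmt_1_general M l a rp hl hrp hroot hlargest
end

section
/- (Exponentially weighted Hardy inequality) Let k>0, n≥1, β∈[0,1], and let u: [r₀,∞)→ℂ be smooth and bounded with u and u' decaying so that boundary terms vanish at infinity. With x(r) = arctan(r/l) and the change of variable dr*/dr = (r²+a²)/Δ₋(r), one has ∫_{r≥5M} e^{−kx} r^{−(n−1)} (n + k(x_r r²)/r) |u|² dr* ≤ 16 l⁴ ∫_{r≥4M} e^{−kx} r^{−(n+1)} ((1−β)/n + β r/(k x_r r²)) |u'|² dr* + C ∫_{4M≤r≤5M} e^{−kx} r^{−(n−1)} (n + k(x_r r²)/r) |u|² dr*, where C depends only on M, l, a. -/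
open MeasureTheory Filter

/-- x(r) = arctan(r/l). -/
noncomputable def xfun (l r : ℝ) : ℝ := Real.arctan (r/l)

/-- x_r = dx/dr = (1/l)/(1+r²/l²). -/
noncomputable def xr (l r : ℝ) : ℝ := (1/l) / (1 + r^2/l^2)

/-- The weight appearing on the left-hand side of the exponentially weighted
Hardy inequality, expressed in the `r` variable: the `r*` volume element
`dr* = ((r²+a²)/Δ₋) dr` has been incorporated. -/
noncomputable def wL (M l a k n r : ℝ) : ℝ :=
  Real.exp (-k * xfun l r) * r ^ (-(n-1) : ℝ) * (n + k * (xr l r * r^2) / r)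
    * ((r^2 + a^2) / Dm M l a r)

/-- The weight appearing on the right-hand side derivative term: here
`|u'|² dr*` with `' = d/dr*` becomes `(Δ₋/(r²+a²)) |du/dr|² dr`. -/
noncomputable def wR (M l a k n β r : ℝ) : ℝ :=
  Real.exp (-k * xfun l r) * r ^ (-(n+1) : ℝ)
    * ((1-β)/n + β * r / (k * (xr l r * r^2)))
    * (Dm M l a r / (r^2 + a^2))


noncomputable def Gf (l k n r : ℝ) : ℝ := l^2 * Real.exp (-k * xfun l r) * r ^ (-n : ℝ)
noncomputable def gf (l k n r : ℝ) : ℝ :=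
  l^2 * Real.exp (-k * xfun l r) * r ^ (-(n+1) : ℝ) * (n + k * xr l r * r)

lemma xr_pos {l : ℝ} (hl : 0 < l) (r : ℝ) : 0 < xr l r := by
  unfold xr; positivity

lemma hasDerivAt_xfun {l : ℝ} (hl : 0 < l) (r : ℝ) :
    HasDerivAt (xfun l) (xr l r) r := by
  have h1 : HasDerivAt (fun t : ℝ => t / l) (1 / l) r := by
    simpa using (hasDerivAt_id r).div_const l
  have h2 := (Real.hasDerivAt_arctan (r / l)).comp r h1
  have : (1 / (1 + (r / l) ^ 2)) * (1 / l) = xr l r := by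
    unfold xr
    rw [div_pow]
    field_simp
  rw [← this]
  exact h2

lemma rpow_split {r : ℝ} (hr : 0 < r) (n : ℝ) :
    r ^ (-n : ℝ) = r ^ (-(n+1) : ℝ) * r := by
  have h := Real.rpow_add hr (-(n+1)) 1
  rw [Real.rpow_one] at h
  rw [show (-(n+1)+1 : ℝ) = -n by ring] at h
  exact h

lemma hasDerivAt_Gf {l k n r : ℝ} (hl : 0 < l) (hr : 0 < r) :
    HasDerivAt (fun t => Gf l k n t) (-gf l k n r) r := by
  have hx : HasDerivAt (fun t => -k * xfun l t) (-k * xr l r) r :=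
    (hasDerivAt_xfun hl r).const_mul (-k)
  have he : HasDerivAt (fun t => Real.exp (-k * xfun l t))
      (Real.exp (-k * xfun l r) * (-k * xr l r)) r := by
    simpa [mul_comm] using hx.exp
  have hp : HasDerivAt (fun t : ℝ => t ^ (-n : ℝ)) ((-n) * r ^ (-n-1 : ℝ)) r :=
    Real.hasDerivAt_rpow_const (Or.inl hr.ne')
  have hsp := rpow_split hr n
  have hexp : (-n-1 : ℝ) = -(n+1) := by ring
  have h : HasDerivAt (fun t => Gf l k n t)
      (l^2 * (Real.exp (-k * xfun l r) * (-k * xr l r) * r ^ (-n : ℝ)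
        + Real.exp (-k * xfun l r) * ((-n) * r ^ (-n-1 : ℝ)))) r := by
    simpa [Gf, mul_assoc, mul_add] using (he.mul hp).const_mul (l^2)
  convert h using 1
  unfold gf
  rw [hexp, hsp]
  ring

lemma Dm_l2 {M l a : ℝ} (hl : 0 < l) (r : ℝ) :
    l^2 * Dm M l a r = (r^2+a^2)*(l^2+r^2) - 2*M*l^2*r := by
  unfold Dm; field_simp

lemma core_ineq {M l a r : ℝ} (hM : 0 < M) (hl : 0 < l) (hr2 : 2*M ≤ r) :
    r^2*(r^2+a^2) ≤ l^2 * Dm M l a r := by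
  rw [Dm_l2 hl]
  have hr0 : 0 ≤ r := by linarith
  have h1 : 0 ≤ r*(r-2*M) := mul_nonneg hr0 (by linarith)
  have key : 0 ≤ r^2 + a^2 - 2*M*r := by nlinarith [sq_nonneg a]
  nlinarith [mul_nonneg (mul_nonneg hl.le hl.le) key]

lemma upper_ineq {M l a r : ℝ} (hM : 0 < M) (hl : 0 < l) (hr0 : 0 ≤ r) :
    l^2 * Dm M l a r ≤ (l^2+r^2)*(r^2+a^2) := by
  rw [Dm_l2 hl]
  nlinarith [mul_nonneg (mul_nonneg hM.le (mul_nonneg hl.le hl.le)) hr0]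

lemma wL_eq {M l a k n r : ℝ} (hr : 0 < r) :
    wL M l a k n r = (Real.exp (-k * xfun l r) * r ^ (-(n+1) : ℝ))
      * (n + k * xr l r * r) * (r^2 * ((r^2+a^2) / Dm M l a r)) := by
  have h2 : r ^ (-(n-1) : ℝ) = r ^ (-(n+1) : ℝ) * r^2 := by
    have h := Real.rpow_add hr (-(n+1)) 2
    rw [show (-(n+1)+2 : ℝ) = -(n-1) by ring] at h
    rw [h, show ((2:ℝ)) = ((2:ℕ):ℝ) by norm_num, Real.rpow_natCast]
  have h3 : k * (xr l r * r^2) / r = k * xr l r * r := by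
    field_simp
  unfold wL
  rw [h2, h3]
  ring

lemma wR_eq {M l a k n β r : ℝ} (hl : 0 < l) (hk : 0 < k) (hr : 0 < r) :
    wR M l a k n β r = (Real.exp (-k * xfun l r) * r ^ (-(n+1) : ℝ))
      * ((1-β)/n + β / (k * xr l r * r)) * (Dm M l a r / (r^2+a^2)) := by
  have hxr := xr_pos hl r
  have h3 : β * r / (k * (xr l r * r^2)) = β / (k * xr l r * r) := by
    field_simp
  unfold wR
  rw [h3]

lemma Gf_eq {l k n r : ℝ} (hr : 0 < r) :
    Gf l k n r = l^2 * (Real.exp (-k * xfun l r) * r ^ (-(n+1) : ℝ)) * r := by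
  unfold Gf
  rw [rpow_split hr n]
  ring

lemma gf_eq (l k n r : ℝ) :
    gf l k n r = l^2 * (Real.exp (-k * xfun l r) * r ^ (-(n+1) : ℝ))
      * (n + k * xr l r * r) := by
  unfold gf; ring

section Pointwise
variable {M l a k n β r : ℝ}

lemma hr_pos (hM : 0 < M) (hr4 : 4*M ≤ r) : 0 < r := by linarith

lemma q_pos (hM : 0 < M) (hr4 : 4*M ≤ r) :
    0 < Real.exp (-k * xfun l r) * r ^ (-(n+1) : ℝ) := by
  have hr := hr_pos hM hr4
  positivity

lemma m_pos (hM : 0 < M) (hl : 0 < l) (hk : 0 < k) (hn : 1 ≤ n) (hr4 : 4*M ≤ r) :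
    0 < n + k * xr l r * r := by
  have := xr_pos hl r
  have hr := hr_pos hM hr4
  have h := mul_pos (mul_pos hk this) hr
  linarith

lemma m_one (hM : 0 < M) (hl : 0 < l) (hk : 0 < k) (hn : 1 ≤ n) (hr4 : 4*M ≤ r) :
    1 ≤ n + k * xr l r * r := by
  have := xr_pos hl r
  have hr := hr_pos hM hr4
  have h := mul_pos (mul_pos hk this) hr
  linarith

lemma tau_nonneg (hl : 0 < l) (hk : 0 < k) (hn : 1 ≤ n) (hβ0 : 0 ≤ β) (hβ1 : β ≤ 1)
    (hM : 0 < M) (hr4 : 4*M ≤ r) :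
    0 ≤ (1-β)/n + β / (k * xr l r * r) := by
  have hxr := xr_pos hl r
  have hr := hr_pos hM hr4
  have h1 : 0 ≤ (1-β)/n := div_nonneg (by linarith) (by linarith)
  have h2 : 0 ≤ β / (k * xr l r * r) := div_nonneg hβ0 (by positivity)
  linarith

lemma mtau_one (hl : 0 < l) (hk : 0 < k) (hn : 1 ≤ n) (hβ0 : 0 ≤ β) (hβ1 : β ≤ 1)
    (hM : 0 < M) (hr4 : 4*M ≤ r) :
    1 ≤ (n + k * xr l r * r) * ((1-β)/n + β / (k * xr l r * r)) := by
  have hxr := xr_pos hl r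
  have hr := hr_pos hM hr4
  set p := k * xr l r * r with hp
  have hppos : 0 < p := by positivity
  have hn0 : 0 < n := by linarith
  rw [div_add_div _ _ (by linarith : n ≠ 0) (ne_of_gt hppos)]
  rw [mul_div_assoc', le_div_iff₀ (by positivity)]
  nlinarith [mul_nonneg hβ0 (sq_nonneg n), mul_nonneg (sub_nonneg.2 hβ1) (sq_nonneg p),
    mul_pos hn0 hppos]

end Pointwise

section Main
variable {M l a k n β r : ℝ}

lemma wL_pos (hM : 0 < M) (hl : 0 < l) (hk : 0 < k) (hn : 1 ≤ n) (hDm : 0 < Dm M l a r) (hr4 : 4*M ≤ r) : 0 < wL M l a k n r := by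
  have hr := hr_pos hM hr4
  rw [wL_eq hr]
  have h1 := q_pos (l := l) (k := k) (n := n) hM hr4
  have h2 := m_pos hM hl hk hn hr4
  have h3 : 0 < r^2*((r^2+a^2)/Dm M l a r) := by positivity
  positivity

lemma wR_nonneg (hM : 0 < M) (hl : 0 < l) (hk : 0 < k) (hn : 1 ≤ n) (hβ0 : 0 ≤ β) (hβ1 : β ≤ 1) (hDm : 0 < Dm M l a r) (hr4 : 4*M ≤ r) :
    0 ≤ wR M l a k n β r := by
  have hr := hr_pos hM hr4
  rw [wR_eq hl hk hr]
  have h1 := q_pos (l := l) (k := k) (n := n) hM hr4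
  have h2 := tau_nonneg hl hk hn hβ0 hβ1 hM hr4
  have h3 : 0 < Dm M l a r/(r^2+a^2) := by positivity
  positivity

lemma P1 (hM : 0 < M) (hl : 0 < l) (hk : 0 < k) (hn : 1 ≤ n) (hDm : 0 < Dm M l a r) (hr4 : 4*M ≤ r) : wL M l a k n r ≤ gf l k n r := by
  have hr := hr_pos hM hr4
  have hq := q_pos (l := l) (k := k) (n := n) hM hr4
  have hm := m_pos hM hl hk hn hr4
  have hd : r^2*((r^2+a^2)/Dm M l a r) ≤ l^2 := by
    rw [← mul_div_assoc, div_le_iff₀ hDm]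
    have := core_ineq (a := a) hM hl (by linarith : 2*M ≤ r)
    linarith
  calc wL M l a k n r
      = (Real.exp (-k * xfun l r) * r ^ (-(n+1) : ℝ)) * (n + k * xr l r * r)
        * (r^2 * ((r^2+a^2)/Dm M l a r)) := wL_eq hr
    _ ≤ (Real.exp (-k * xfun l r) * r ^ (-(n+1) : ℝ)) * (n + k * xr l r * r) * l^2 :=
        mul_le_mul_of_nonneg_left hd (mul_pos hq hm).le
    _ = gf l k n r := by rw [gf_eq]; ring

lemma gf_le (hM : 0 < M) (hl : 0 < l) (hk : 0 < k) (hn : 1 ≤ n) (hDm : 0 < Dm M l a r) (hr4 : 4*M ≤ r) :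
    gf l k n r ≤ (l^2/(16*M^2) + 1) * wL M l a k n r := by
  have hr := hr_pos hM hr4
  have hq := q_pos (l := l) (k := k) (n := n) hM hr4
  have hm := m_pos hM hl hk hn hr4
  have h16 : 16*M^2 ≤ r^2 := by nlinarith
  have hd : l^2 ≤ (l^2/(16*M^2) + 1) * (r^2*((r^2+a^2)/Dm M l a r)) := by
    rw [← mul_div_assoc, mul_div_assoc', le_div_iff₀ hDm]
    have hup := upper_ineq (a := a) hM hl hr.le
    have h1 : (l^2+r^2)*(r^2+a^2) ≤ ((l^2/(16*M^2) + 1) * r^2)*(r^2+a^2) := by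
      apply mul_le_mul_of_nonneg_right _ (by positivity)
      have h0 : l^2 * (16*M^2) ≤ l^2 * r^2 := mul_le_mul_of_nonneg_left h16 (sq_nonneg l)
      have h2 : l^2 ≤ l^2/(16*M^2)*r^2 := by
        rw [div_mul_eq_mul_div, le_div_iff₀ (by positivity)]
        linarith
      nlinarith [h2]
    nlinarith
  calc gf l k n r
      = (Real.exp (-k * xfun l r) * r ^ (-(n+1) : ℝ)) * (n + k * xr l r * r) * l^2 := by
        rw [gf_eq]; ring
    _ ≤ (Real.exp (-k * xfun l r) * r ^ (-(n+1) : ℝ)) * (n + k * xr l r * r)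
        * ((l^2/(16*M^2) + 1) * (r^2*((r^2+a^2)/Dm M l a r))) :=
        mul_le_mul_of_nonneg_left hd (mul_pos hq hm).le
    _ = (l^2/(16*M^2) + 1) * wL M l a k n r := by rw [wL_eq hr]; ring

lemma P2 (hM : 0 < M) (hl : 0 < l) (hk : 0 < k) (hn : 1 ≤ n) (hβ0 : 0 ≤ β) (hβ1 : β ≤ 1) (hDm : 0 < Dm M l a r) (hr4 : 4*M ≤ r) :
    (Gf l k n r)^2 ≤ 4*l^4*(gf l k n r * wR M l a k n β r) := by
  have hr := hr_pos hM hr4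
  have hq := q_pos (l := l) (k := k) (n := n) hM hr4
  have hm := m_pos hM hl hk hn hr4
  have hτ := tau_nonneg hl hk hn hβ0 hβ1 hM hr4
  have hmτ := mtau_one hl hk hn hβ0 hβ1 hM hr4
  have hA : (0:ℝ) < r^2 + a^2 := by positivity
  set q := Real.exp (-k * xfun l r) * r ^ (-(n+1) : ℝ) with hqdef
  set m := n + k * xr l r * r with hmdef
  set τ := (1-β)/n + β / (k * xr l r * r) with hτdef
  have key : r^2*(r^2+a^2) ≤ 4*l^2*((m*τ)*Dm M l a r) := by
    have h0 := core_ineq (a := a) hM hl (by linarith : 2*M ≤ r)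
    nlinarith [mul_nonneg (sub_nonneg.2 hmτ) (mul_nonneg (mul_nonneg hl.le hl.le) hDm.le),
      mul_pos (mul_pos hl hl) (mul_pos (lt_of_lt_of_le one_pos hmτ) hDm)]
  have hR : 4*l^4*(gf l k n r * wR M l a k n β r)
      = (4*l^4*l^2*q^2*m*τ*(Dm M l a r))/(r^2+a^2) := by
    rw [gf_eq, wR_eq hl hk hr]; ring
  rw [Gf_eq hr, hR, le_div_iff₀ hA, ← hqdef]
  nlinarith [mul_le_mul_of_nonneg_left key (by positivity : (0:ℝ) ≤ l^4*q^2)]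

lemma P3 (hM : 0 < M) (hl : 0 < l) (hk : 0 < k) (hn : 1 ≤ n) (hDm : 0 < Dm M l a r) (hr4 : 4*M ≤ r) (hr5 : r ≤ 5*M) :
    2 * Gf l k n r ≤ ((l^2+25*M^2)/M) * wL M l a k n r := by
  have hr := hr_pos hM hr4
  have hq := q_pos (l := l) (k := k) (n := n) hM hr4
  have hm1 := m_one hM hl hk hn hr4
  have hA : (0:ℝ) < r^2 + a^2 := by positivity
  set K := (l^2+25*M^2)/M with hK
  have hKpos : 0 < K := by positivity
  have h1 : 2*(l^2+r^2) ≤ K*r := by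
    rw [hK, div_mul_eq_mul_div, le_div_iff₀ hM]
    nlinarith [mul_self_le_mul_self hr.le hr5, mul_le_mul_of_nonneg_right hr4
      (by positivity : (0:ℝ) ≤ l^2 + 25*M^2), mul_pos hM (mul_pos hl hl),
      mul_le_mul_of_nonneg_left (mul_self_le_mul_self hr.le hr5) hM.le]
  have hd : 2*l^2*r ≤ K*(n + k * xr l r * r)*(r^2*((r^2+a^2)/Dm M l a r)) := by
    rw [← mul_div_assoc, mul_div_assoc', le_div_iff₀ hDm]
    have hup := upper_ineq (a := a) hM hl hr.le
    have c1 := mul_le_mul_of_nonneg_left hup (by positivity : (0:ℝ) ≤ 2*r)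
    have c2 := mul_le_mul_of_nonneg_right h1 (by positivity : (0:ℝ) ≤ r*(r^2+a^2))
    have c3 : K*(r^2*(r^2+a^2)) ≤ K*(n + k * xr l r * r)*(r^2*(r^2+a^2)) := by
      nlinarith [mul_nonneg (sub_nonneg.2 hm1)
        (mul_nonneg hKpos.le (mul_nonneg (sq_nonneg r) hA.le))]
    nlinarith
  calc 2 * Gf l k n r = (Real.exp (-k * xfun l r) * r ^ (-(n+1) : ℝ)) * (2*l^2*r) := by
        rw [Gf_eq hr]; ring
    _ ≤ (Real.exp (-k * xfun l r) * r ^ (-(n+1) : ℝ))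
        * (K*(n + k * xr l r * r)*(r^2*((r^2+a^2)/Dm M l a r))) :=
        mul_le_mul_of_nonneg_left hd hq.le
    _ = K * wL M l a k n r := by rw [wL_eq hr]; ring

end Main

lemma amgm {gfv Gfv wRv l4 A B : ℝ} (hg : 0 < gfv) (hw : 0 ≤ wRv)
    (hA : 0 ≤ A) (hB : 0 ≤ B) (hP : Gfv^2 ≤ 4*l4*(gfv*wRv)) (hG : 0 ≤ Gfv) :
    2*Gfv*A*B ≤ (1/2)*(gfv*A^2) + 8*l4*(wRv*B^2) := by
  nlinarith [sq_nonneg (gfv*A - 2*Gfv*B), mul_le_mul_of_nonneg_right hP (sq_nonneg B),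
    mul_pos hg hg, sq_nonneg A, sq_nonneg B, mul_nonneg (mul_nonneg hg.le hA) hB]

lemma gf_pos {M l k n r : ℝ} (hM : 0 < M) (hl : 0 < l) (hk : 0 < k) (hn : 1 ≤ n)
    (hr4 : 4*M ≤ r) : 0 < gf l k n r := by
  have hr := hr_pos hM hr4
  rw [gf_eq]
  exact mul_pos (mul_pos (by positivity) (q_pos hM hr4)) (m_pos hM hl hk hn hr4)

lemma Gf_nonneg {l k n r : ℝ} (hr : 0 < r) : 0 ≤ Gf l k n r := by
  unfold Gf; positivity

lemma contOn_rpow (c : ℝ) : ContinuousOn (fun t : ℝ => t ^ (c : ℝ)) (Set.Ioi 0) :=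
  fun t ht => (Real.continuousAt_rpow_const t c (Or.inl (ne_of_gt ht))).continuousWithinAt

lemma cont_exp_xfun (l k : ℝ) : Continuous (fun t => Real.exp (-k * xfun l t)) := by
  unfold xfun
  exact (Real.continuous_exp.comp ((continuous_const.mul
    (Real.continuous_arctan.comp (continuous_id.div_const l)))))

lemma contOn_Gf (l k n : ℝ) : ContinuousOn (fun t => Gf l k n t) (Set.Ioi 0) := by
  unfold Gf
  exact ((continuous_const.mul (cont_exp_xfun l k)).continuousOn.mul (contOn_rpow (-n)))

lemma cont_xr (l : ℝ) (hl : 0 < l) : Continuous (fun t => xr l t) := by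
  unfold xr
  apply continuous_const.div
  · continuity
  · intro t; positivity

lemma contOn_gf (l k n : ℝ) (hl : 0 < l) :
    ContinuousOn (fun t => gf l k n t) (Set.Ioi 0) := by
  unfold gf
  refine ContinuousOn.mul (ContinuousOn.mul ?_ (contOn_rpow (-(n+1)))) ?_
  · exact (continuous_const.mul (cont_exp_xfun l k)).continuousOn
  · exact (continuous_const.add ((continuous_const.mul (cont_xr l hl)).mul
      continuous_id)).continuousOn

lemma tendsto_Gf_mul {l k n B : ℝ} (hl : 0 < l) (hk : 0 < k) (hn : 1 ≤ n)
    {u : ℝ → ℂ} (hB : ∀ r : ℝ, ‖u r‖ ≤ B) :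
    Tendsto (fun t => Gf l k n t * ‖u t‖^2) atTop (nhds 0) := by
  have hB0 : 0 ≤ B := le_trans (norm_nonneg _) (hB 0)
  set Cb := l^2 * Real.exp (k * (Real.pi/2)) * B^2 with hCb
  have hub : ∀ᶠ t in atTop, Gf l k n t * ‖u t‖^2 ≤ Cb * t ^ (-n : ℝ) := by
    filter_upwards [eventually_gt_atTop (0:ℝ)] with t ht
    have h1 : Real.exp (-k * xfun l t) ≤ Real.exp (k * (Real.pi/2)) := by
      apply Real.exp_le_exp.2
      have := Real.neg_pi_div_two_lt_arctan (t/l)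
      unfold xfun
      nlinarith
    have h2 : ‖u t‖^2 ≤ B^2 := by
      have := hB t
      nlinarith [norm_nonneg (u t)]
    have h3 : (0:ℝ) ≤ t ^ (-n : ℝ) := Real.rpow_nonneg ht.le _
    unfold Gf
    calc l^2 * Real.exp (-k * xfun l t) * t ^ (-n:ℝ) * ‖u t‖^2
        ≤ l^2 * Real.exp (k * (Real.pi/2)) * t ^ (-n:ℝ) * B^2 := by
          apply mul_le_mul _ h2 (sq_nonneg _) (by positivity)
          exact mul_le_mul_of_nonneg_right (mul_le_mul_of_nonneg_left h1 (by positivity)) h3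
      _ = Cb * t ^ (-n:ℝ) := by rw [hCb]; ring
  have hlb : ∀ᶠ t in atTop, 0 ≤ Gf l k n t * ‖u t‖^2 := by
    filter_upwards [eventually_gt_atTop (0:ℝ)] with t ht
    exact mul_nonneg (Gf_nonneg ht) (sq_nonneg _)
  have hg0 : Tendsto (fun t : ℝ => Cb * t ^ (-n : ℝ)) atTop (nhds 0) := by
    have := (tendsto_rpow_neg_atTop (by linarith : (0:ℝ) < n)).const_mul Cb
    simpa using this
  exact squeeze_zero' hlb hub hg0

/-- exponentially weighted Hardy inequality. -/
theorem stmt_4 (M l a : ℝ) (hM : 0 < M) (hl : 0 < l) (ha : |a| < l)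
    (hΔ : ∀ r : ℝ, 4*M ≤ r → 0 < Dm M l a r) :
    ∃ C : ℝ, 0 < C ∧
      ∀ (k n β : ℝ), 0 < k → 1 ≤ n → β ∈ Set.Icc (0:ℝ) 1 →
      ∀ u : ℝ → ℂ, ContDiff ℝ (⊤ : ℕ∞) u → (∃ B : ℝ, ∀ r : ℝ, ‖u r‖ ≤ B) →
      Tendsto u atTop (nhds 0) →
      IntegrableOn (fun r => wL M l a k n r * ‖u r‖^2) (Set.Ioi (5*M)) →
      IntegrableOn (fun r => wR M l a k n β r * ‖deriv u r‖^2) (Set.Ioi (4*M)) →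
      IntegrableOn (fun r => wL M l a k n r * ‖u r‖^2) (Set.Ioc (4*M) (5*M)) →
      (∫ r in Set.Ioi (5*M), wL M l a k n r * ‖u r‖^2)
        ≤ 16 * l^4 * (∫ r in Set.Ioi (4*M), wR M l a k n β r * ‖deriv u r‖^2)
          + C * (∫ r in Set.Ioc (4*M) (5*M), wL M l a k n r * ‖u r‖^2) := by
  refine ⟨(l^2+25*M^2)/M^2 + 1, by positivity, ?_⟩
  intro k n β hk hn hβ u hu hBex hu0 hIL hIR hILc
  obtain ⟨B, hB⟩ := hBex
  obtain ⟨hβ0, hβ1⟩ := hβ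
  clear hu0
  have hud : ∀ t, HasDerivAt u (deriv u t) t := fun t =>
    (hu.differentiable (by simp) t).hasDerivAt
  set D : ℝ → ℝ := fun t =>
    (inner ℝ (u t) (deriv u t) : ℝ) + (inner ℝ (deriv u t) (u t) : ℝ) with hDdef
  have hD : ∀ t, HasDerivAt (fun s => ‖u s‖^2) (D t) t := by
    intro t
    have h := HasDerivAt.inner ℝ (hud t) (hud t)
    have he : (fun s => (inner ℝ (u s) (u s) : ℝ)) = fun s => ‖u s‖^2 :=
      funext fun s => real_inner_self_eq_norm_sq _
    rw [he] at h
    exact h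
  have hDle : ∀ t, |D t| ≤ 2 * ‖u t‖ * ‖deriv u t‖ := by
    intro t
    calc |D t| ≤ |(inner ℝ (u t) (deriv u t) : ℝ)| + |(inner ℝ (deriv u t) (u t) : ℝ)| :=
          abs_add_le _ _
      _ ≤ ‖u t‖*‖deriv u t‖ + ‖deriv u t‖*‖u t‖ :=
          add_le_add (abs_real_inner_le_norm _ _) (abs_real_inner_le_norm _ _)
      _ = 2*‖u t‖*‖deriv u t‖ := by ring
  have hDcont : Continuous D := by
    have h1 : Continuous (deriv u) := hu.continuous_deriv (by simp)
    have h2 : Continuous u := hu.continuous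
    exact (h2.inner h1).add (h1.inner h2)
  have hnormsq : Continuous (fun t => ‖u t‖^2) := (hu.continuous.norm).pow 2
  set K1 := (l^2+25*M^2)/M with hK1
  set R0 := ∫ t in Set.Ioi (4*M), wR M l a k n β t * ‖deriv u t‖^2 with hR0
  set L := ∫ t in Set.Ioi (5*M), wL M l a k n t * ‖u t‖^2 with hL
  have hwRnn : ∀ t ∈ Set.Ioi (4*M), 0 ≤ wR M l a k n β t * ‖deriv u t‖^2 := by
    intro t ht
    exact mul_nonneg (wR_nonneg hM hl hk hn hβ0 hβ1 (hΔ t (le_of_lt ht)) (le_of_lt ht))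
      (sq_nonneg _)
  have key : ∀ s ∈ Set.Ioc (4*M) (5*M),
      L ≤ K1 * (wL M l a k n s * ‖u s‖^2) + 16*l^4 * R0 := by
    intro s hs
    obtain ⟨hs4, hs5⟩ := hs
    have hs0 : 0 < s := by linarith
    have hsub45 : Set.Ioi s ⊆ Set.Ioi (4*M) := Set.Ioi_subset_Ioi hs4.le
    have hsub5 : Set.Ioi (5*M) ⊆ Set.Ioi s := Set.Ioi_subset_Ioi hs5
    have hsubpos : Set.Ioi s ⊆ Set.Ioi (0:ℝ) := Set.Ioi_subset_Ioi hs0.le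
    have measIoi : MeasurableSet (Set.Ioi s) := measurableSet_Ioi
    have hIL_s : IntegrableOn (fun t => wL M l a k n t * ‖u t‖^2) (Set.Ioi s) := by
      rw [← Set.Ioc_union_Ioi_eq_Ioi hs5]
      exact (hILc.mono_set (Set.Ioc_subset_Ioc_left hs4.le)).union hIL
    have hgfae : AEStronglyMeasurable (fun t => gf l k n t * ‖u t‖^2)
        (volume.restrict (Set.Ioi s)) :=
      (((contOn_gf l k n hl).mono hsubpos).mul hnormsq.continuousOn).aestronglyMeasurable measIoi
    have hIgf : IntegrableOn (fun t => gf l k n t * ‖u t‖^2) (Set.Ioi s) := by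
      apply Integrable.mono' (hIL_s.const_mul (l^2/(16*M^2) + 1)) hgfae
      rw [ae_restrict_iff' measIoi]
      refine ae_of_all _ (fun t ht => ?_)
      have ht4 : 4*M ≤ t := le_of_lt (lt_trans hs4 ht)
      have hDmt := hΔ t ht4
      have h1 := gf_le hM hl hk hn hDmt ht4
      have h2 : 0 ≤ gf l k n t := (gf_pos hM hl hk hn ht4).le
      rw [Real.norm_eq_abs, abs_of_nonneg (mul_nonneg h2 (sq_nonneg _))]
      calc gf l k n t * ‖u t‖^2
          ≤ ((l^2/(16*M^2)+1) * wL M l a k n t) * ‖u t‖^2 :=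
            mul_le_mul_of_nonneg_right h1 (sq_nonneg _)
        _ = (l^2/(16*M^2)+1) * (wL M l a k n t * ‖u t‖^2) := by ring
    have hIR_s : IntegrableOn (fun t => wR M l a k n β t * ‖deriv u t‖^2) (Set.Ioi s) :=
      hIR.mono_set hsub45
    set bnd : ℝ → ℝ := fun t => (1/2)*(gf l k n t * ‖u t‖^2)
      + 8*l^4*(wR M l a k n β t * ‖deriv u t‖^2) with hbnd
    have hIbnd : IntegrableOn bnd (Set.Ioi s) := (hIgf.const_mul _).add (hIR_s.const_mul _)
    have hGD_abs : ∀ t, 4*M ≤ t → |Gf l k n t * D t| ≤ bnd t := by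
      intro t ht4
      have ht0 : 0 < t := by linarith
      have hDmt := hΔ t ht4
      have hGn := Gf_nonneg (l := l) (k := k) (n := n) ht0
      have h1 : |Gf l k n t * D t| = Gf l k n t * |D t| := by
        rw [abs_mul, abs_of_nonneg hGn]
      rw [h1]
      calc Gf l k n t * |D t| ≤ Gf l k n t * (2 * ‖u t‖ * ‖deriv u t‖) :=
            mul_le_mul_of_nonneg_left (hDle t) hGn
        _ = 2 * Gf l k n t * ‖u t‖ * ‖deriv u t‖ := by ring
        _ ≤ (1/2)*(gf l k n t * ‖u t‖^2) + 8*l^4*(wR M l a k n β t * ‖deriv u t‖^2) := by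
            have := amgm (gf_pos hM hl hk hn ht4)
              (wR_nonneg hM hl hk hn hβ0 hβ1 hDmt ht4) (norm_nonneg (u t))
              (norm_nonneg (deriv u t)) (P2 hM hl hk hn hβ0 hβ1 hDmt ht4) hGn
            nlinarith [this]
        _ = bnd t := rfl
    have hIGD : IntegrableOn (fun t => Gf l k n t * D t) (Set.Ioi s) := by
      apply Integrable.mono' hIbnd
        ((((contOn_Gf l k n).mono hsubpos).mul hDcont.continuousOn).aestronglyMeasurable measIoi)
      rw [ae_restrict_iff' measIoi]
      refine ae_of_all _ (fun t ht => ?_)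
      exact hGD_abs t (le_of_lt (lt_trans hs4 ht))
    have hderiv : ∀ t ∈ Set.Ici s, HasDerivAt (fun t => Gf l k n t * ‖u t‖^2)
        (Gf l k n t * D t - gf l k n t * ‖u t‖^2) t := by
      intro t ht
      have ht0 : 0 < t := lt_of_lt_of_le hs0 ht
      have h := (hasDerivAt_Gf (k := k) (n := n) hl ht0).mul (hD t)
      exact h.congr_deriv (by ring)
    have hibp := integral_Ioi_of_hasDerivAt_of_tendsto' hderiv
      (hIGD.sub hIgf) (tendsto_Gf_mul hl hk hn hB)
    rw [integral_sub hIGD hIgf] at hibp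
    set A := ∫ t in Set.Ioi s, gf l k n t * ‖u t‖^2 with hA
    set T := ∫ t in Set.Ioi s, Gf l k n t * D t with hT
    have hAeq : A = Gf l k n s * ‖u s‖^2 + T := by linarith [hibp]
    have hTle : T ≤ (1/2)*A + 8*l^4*(∫ t in Set.Ioi s, wR M l a k n β t * ‖deriv u t‖^2) := by
      have h := setIntegral_mono_on hIGD hIbnd measIoi
        (fun t ht => le_trans (le_abs_self _) (hGD_abs t (le_of_lt (lt_trans hs4 ht))))
      rw [hbnd] at h
      rw [integral_add (hIgf.const_mul _) (hIR_s.const_mul _),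
        integral_const_mul, integral_const_mul] at h
      exact h
    have hRmono : (∫ t in Set.Ioi s, wR M l a k n β t * ‖deriv u t‖^2) ≤ R0 := by
      apply setIntegral_mono_set hIR
      · filter_upwards [ae_restrict_mem (measurableSet_Ioi (a := 4*M))] with t ht
        exact hwRnn t ht
      · exact hsub45.eventuallyLE
    have hAle : A ≤ 2*(Gf l k n s * ‖u s‖^2) + 16*l^4*R0 := by
      nlinarith [mul_le_mul_of_nonneg_left hRmono (by positivity : (0:ℝ) ≤ 8*l^4)]
    have hLHS1 : L ≤ ∫ t in Set.Ioi (5*M), gf l k n t * ‖u t‖^2 := by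
      apply setIntegral_mono_on hIL (hIgf.mono_set hsub5) measurableSet_Ioi
      intro t ht
      have ht4 : 4*M ≤ t := by simp only [Set.mem_Ioi] at ht; linarith
      exact mul_le_mul_of_nonneg_right (P1 hM hl hk hn (hΔ t ht4) ht4) (sq_nonneg _)
    have hLHS2 : (∫ t in Set.Ioi (5*M), gf l k n t * ‖u t‖^2) ≤ A := by
      apply setIntegral_mono_set hIgf
      · filter_upwards [ae_restrict_mem (measurableSet_Ioi (a := s))] with t ht
        have ht4 : 4*M ≤ t := le_of_lt (lt_trans hs4 ht)
        exact mul_nonneg (gf_pos hM hl hk hn ht4).le (sq_nonneg _)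
      · exact hsub5.eventuallyLE
    have hP3 := P3 hM hl hk hn (hΔ s hs4.le) hs4.le hs5
    have h2G : 2*(Gf l k n s * ‖u s‖^2) ≤ K1*(wL M l a k n s * ‖u s‖^2) := by
      have := mul_le_mul_of_nonneg_right hP3 (sq_nonneg ‖u s‖)
      nlinarith [this]
    linarith
  -- averaging over s
  set I := ∫ t in Set.Ioc (4*M) (5*M), wL M l a k n t * ‖u t‖^2 with hI
  have hInn : 0 ≤ I := setIntegral_nonneg measurableSet_Ioc (fun t ht =>
    mul_nonneg (wL_pos hM hl hk hn (hΔ t ht.1.le) ht.1.le).le (sq_nonneg _))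
  have hconstInt : IntegrableOn (fun _ : ℝ => L - 16*l^4*R0) (Set.Ioc (4*M) (5*M)) :=
    integrableOn_const (by rw [Real.volume_Ioc]; exact ENNReal.ofReal_ne_top)
  have hmono := setIntegral_mono_on hconstInt (hILc.const_mul K1) measurableSet_Ioc
    (fun s hs => by linarith [key s hs])
  rw [setIntegral_const, integral_const_mul] at hmono
  have hvol : volume.real (Set.Ioc (4*M) (5*M)) = M := by
    rw [measureReal_def, Real.volume_Ioc, ENNReal.toReal_ofReal (by linarith)]
    ring
  rw [hvol, smul_eq_mul] at hmono
  -- hmono : M * (L - 16*l^4*R0) ≤ K1 * I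
  have hfin : M * (L - 16*l^4*R0) ≤ M * (((l^2+25*M^2)/M^2 + 1) * I) := by
    have hMr : M * ((l^2+25*M^2)/M^2 + 1) = K1 + M := by
      rw [hK1]; field_simp
    nlinarith [mul_nonneg hM.le hInn]
  have := (mul_le_mul_iff_of_pos_left hM).mp hfin
  linarith
end

section
/- (Hardy inequality absorbing the mass term) For any r_cut ≥ r₊ and any smooth complex function u on [r_cut,∞) (in the r* variable) with u·r^{1/2} = o(1) as r→∞, one has (1/(4l²)) ∫_{r≥r_cut} (Δ₋/(r²+a²)) |u|² dr* ≤ ∫_{r≥r_cut} |u'|² dr*. -/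
open MeasureTheory Filter

lemma norm_sq_eq_aux (z : ℂ) : ‖z‖^2 = z.re^2 + z.im^2 := by
  rw [Complex.sq_norm, Complex.normSq_apply]; ring

lemma key_bound_aux (M l a rp : ℝ) (hl : 0 < l)
    (hrp : 0 < rp) (hroot : Dm M l a rp = 0)
    (hΔpos : ∀ r : ℝ, rp < r → 0 < Dm M l a r) :
    ∀ rcut : ℝ, rp ≤ rcut → ∀ r : ℝ, rcut ≤ r →
      (r - rcut)^2 * (r^2 + a^2) ≤ l^2 * Dm M l a r := by
  have hl2 : (l:ℝ)^2 ≠ 0 := by positivity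
  have hroot' : (rp^2+a^2)*(l^2+rp^2) = 2*M*l^2*rp := by
    have h0 : l^2 * Dm M l a rp = (rp^2+a^2)*(l^2+rp^2) - 2*M*l^2*rp := by
      unfold Dm; field_simp
    rw [hroot, mul_zero] at h0
    linarith
  set Q : ℝ → ℝ := fun r => 2*rp^2*r^2 + rp*(l^2+rp^2)*r - a^2*(l^2-rp^2) with hQ
  have hid : ∀ r : ℝ, l^2 * rp * Dm M l a r
      = (r - rp) * Q r + rp*(r-rp)^2*(r^2+a^2) := by
    intro r
    have expand : l^2 * Dm M l a r = (r^2+a^2)*(l^2+r^2) - 2*M*l^2*r := by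
      unfold Dm; field_simp
    simp only [hQ]
    linear_combination rp * expand + r * hroot'
  have hQrp : 0 ≤ Q rp := by
    set S : ℝ → ℝ := fun r => Q r + rp*(r-rp)*(r^2+a^2) with hS
    have hcont : Tendsto S (nhdsWithin rp (Set.Ioi rp)) (nhds (S rp)) := by
      have : Continuous S := by simp only [hS, hQ]; continuity
      exact (this.tendsto rp).mono_left nhdsWithin_le_nhds
    have hev : ∀ᶠ r in nhdsWithin rp (Set.Ioi rp), 0 ≤ S r := by
      filter_upwards [self_mem_nhdsWithin] with r hr
      have hr' : rp < r := hr
      have h1 : 0 < (r - rp) * S r := by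
        have h2 : (r - rp) * S r = l^2 * rp * Dm M l a r := by
          rw [hid r]; simp only [hS]; ring
        rw [h2]
        have := hΔpos r hr'
        positivity
      nlinarith [sub_pos.mpr hr']
    have h3 : 0 ≤ S rp := ge_of_tendsto hcont hev
    have h4 : S rp = Q rp := by simp [hS]
    linarith
  intro rcut hrc r hr
  have hrrp : rp ≤ r := le_trans hrc hr
  have hQr : 0 ≤ Q r := by
    simp only [hQ] at hQrp ⊢
    nlinarith [mul_nonneg (sub_nonneg.mpr hrrp) hrp.le]
  have h1 : (r - rcut)^2 ≤ (r - rp)^2 := by nlinarith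
  have h2 : rp * ((r - rcut)^2 * (r^2+a^2)) ≤ rp * (l^2 * Dm M l a r) := by
    have h3 := hid r
    nlinarith [mul_nonneg (sub_nonneg.mpr hrrp) hQr, sq_nonneg r, sq_nonneg a,
      mul_le_mul_of_nonneg_right h1 (by positivity : (0:ℝ) ≤ r^2+a^2)]
  have := (mul_le_mul_iff_right₀ hrp).mp h2
  linarith

/-- Abstract Hardy inequality on a half line. -/
lemma hardy_aux (c : ℝ) (hc : 0 < c) (u : ℝ → ℂ) (hu : ContDiff ℝ (⊤ : ℕ∞) u)
    (hdecay : Tendsto (fun r : ℝ => ‖u r‖ * Real.sqrt r) atTop (nhds 0))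
    (V : ℝ → ℝ) (hVcont : ContinuousOn V (Set.Ici c))
    (hVbd : ∀ r : ℝ, c ≤ r → (r - c)^2 ≤ V r)
    (hint1 : IntegrableOn (fun r : ℝ => ‖u r‖^2) (Set.Ioi c))
    (hint2 : IntegrableOn (fun r : ℝ => V r * ‖deriv u r‖^2) (Set.Ioi c)) :
    ∫ r in Set.Ioi c, ‖u r‖^2 ≤ 4 * ∫ r in Set.Ioi c, V r * ‖deriv u r‖^2 := by
  have hud : Differentiable ℝ u := hu.differentiable (by simp)
  have hu' : Continuous (deriv u) := hu.continuous_deriv (by simp)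
  have hure : Continuous fun r : ℝ => (u r).re := Complex.continuous_re.comp hu.continuous
  have huim : Continuous fun r : ℝ => (u r).im := Complex.continuous_im.comp hu.continuous
  have hvre : Continuous fun r : ℝ => (deriv u r).re := Complex.continuous_re.comp hu'
  have hvim : Continuous fun r : ℝ => (deriv u r).im := Complex.continuous_im.comp hu'
  set n : ℝ → ℝ := fun r => (u r).re^2 + (u r).im^2 with hn
  have hneq : ∀ r : ℝ, ‖u r‖^2 = n r := fun r => norm_sq_eq_aux (u r)
  set φ : ℝ → ℝ := fun r => n r
      + (r - c) * (2*((u r).re*(deriv u r).re + (u r).im*(deriv u r).im)) with hφ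
  have hncont : Continuous n := by simp only [hn]; continuity
  have hφcont : Continuous φ := by
    simp only [hφ, hn]
    continuity
  have hF : ∀ r : ℝ, HasDerivAt (fun t => (t - c) * n t) (φ r) r := by
    intro r
    have h1 : HasDerivAt (fun t => (u t).re) (deriv u r).re r := by
      exact (Complex.reCLM.hasFDerivAt.comp_hasDerivAt r (hud r).hasDerivAt)
    have h2 : HasDerivAt (fun t => (u t).im) (deriv u r).im r := by
      exact (Complex.imCLM.hasFDerivAt.comp_hasDerivAt r (hud r).hasDerivAt)
    have h3 : HasDerivAt n
        (2*(u r).re*(deriv u r).re + 2*(u r).im*(deriv u r).im) r := by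
      have := ((h1.pow 2).add (h2.pow 2))
      simp only [hn]
      refine this.congr_deriv ?_
      push_cast
      ring
    have h4 : HasDerivAt (fun t : ℝ => t - c) 1 r := (hasDerivAt_id r).sub_const c
    have := h4.mul h3
    simp only [hφ]
    refine this.congr_deriv ?_
    ring
  have hFTC : ∀ R : ℝ, c ≤ R → ∫ r in c..R, φ r = (R - c) * n R := by
    intro R hR
    have h := intervalIntegral.integral_eq_sub_of_hasDerivAt
      (f := fun t => (t - c) * n t) (f' := φ)
      (fun x _ => hF x) (hφcont.intervalIntegrable c R)
    simpa using h
  -- pointwise inequality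
  have hpt : ∀ r : ℝ, c ≤ r → (1/2) * n r ≤ φ r + 2 * (V r * ‖deriv u r‖^2) := by
    intro r hr
    have h5 : ‖deriv u r‖^2 = (deriv u r).re^2 + (deriv u r).im^2 := norm_sq_eq_aux _
    have hVb := hVbd r hr
    have hAM : (1/2) * n r ≤ φ r + 2 * ((r - c)^2 * ‖deriv u r‖^2) := by
      simp only [hφ, hn, h5]
      nlinarith [sq_nonneg ((u r).re + 2*(r-c)*(deriv u r).re),
        sq_nonneg ((u r).im + 2*(r-c)*(deriv u r).im)]
    have hB : (r - c)^2 * ‖deriv u r‖^2 ≤ V r * ‖deriv u r‖^2 :=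
      mul_le_mul_of_nonneg_right hVb (by positivity)
    linarith
  set W : ℝ := ∫ r in Set.Ioi c, V r * ‖deriv u r‖^2 with hW
  have hwnn : ∀ r : ℝ, c ≤ r → 0 ≤ V r * ‖deriv u r‖^2 := by
    intro r hr
    have : (0:ℝ) ≤ V r := le_trans (sq_nonneg _) (hVbd r hr)
    positivity
  have key2 : ∀ R : ℝ, c ≤ R →
      (1/2) * ∫ r in c..R, n r ≤ (R - c) * n R + 2 * W := by
    intro R hR
    have hicc : Set.uIcc c R = Set.Icc c R := Set.uIcc_of_le hR
    have hIw : IntervalIntegrable (fun r => V r * ‖deriv u r‖^2) volume c R := by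
      apply ContinuousOn.intervalIntegrable
      rw [hicc]
      exact (hVcont.mono (Set.Icc_subset_Ici_self)).mul
        ((hu'.norm.pow 2).continuousOn)
    have hIn : IntervalIntegrable n volume c R := hncont.intervalIntegrable c R
    have hIφ : IntervalIntegrable φ volume c R := hφcont.intervalIntegrable c R
    have step1 : ∫ r in c..R, (1/2) * n r
        ≤ ∫ r in c..R, (φ r + 2 * (V r * ‖deriv u r‖^2)) := by
      apply intervalIntegral.integral_mono_on hR
        (hIn.const_mul _) (hIφ.add (hIw.const_mul _))
      intro x hx
      exact hpt x hx.1
    rw [intervalIntegral.integral_const_mul] at step1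
    rw [intervalIntegral.integral_add hIφ (hIw.const_mul _),
      intervalIntegral.integral_const_mul, hFTC R hR] at step1
    have step2 : ∫ r in c..R, V r * ‖deriv u r‖^2 ≤ W := by
      rw [intervalIntegral.integral_of_le hR, hW]
      apply setIntegral_mono_set hint2
      · filter_upwards [ae_restrict_mem measurableSet_Ioi] with r hr
        exact hwnn r (le_of_lt hr)
      · exact HasSubset.Subset.eventuallyLE Set.Ioc_subset_Ioi_self
    nlinarith
  -- limits
  have hInt_n : IntegrableOn n (Set.Ioi c) := by
    have : (fun r : ℝ => ‖u r‖^2) = n := funext hneq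
    rwa [this] at hint1
  have hTend1 : Tendsto (fun R => (1/2) * ∫ r in c..R, n r) atTop
      (nhds ((1/2) * ∫ r in Set.Ioi c, n r)) :=
    (intervalIntegral_tendsto_integral_Ioi c hInt_n tendsto_id).const_mul _
  have hsq : Tendsto (fun R : ℝ => (‖u R‖ * Real.sqrt R)^2) atTop (nhds 0) := by
    have h := hdecay.mul hdecay
    rw [mul_zero] at h
    simpa only [pow_two] using h
  have hTend0 : Tendsto (fun R : ℝ => (R - c) * n R) atTop (nhds 0) := by
    apply squeeze_zero' ?_ ?_ hsq
    · filter_upwards [eventually_ge_atTop c] with R hR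
      have hn0 : (0:ℝ) ≤ n R := by simp only [hn]; positivity
      have : (0:ℝ) ≤ R - c := by linarith
      positivity
    · filter_upwards [eventually_ge_atTop c] with R hR
      have hR0 : (0:ℝ) ≤ R := le_trans hc.le hR
      have h1 : (‖u R‖ * Real.sqrt R)^2 = R * n R := by
        rw [mul_pow, ← hneq R, Real.sq_sqrt hR0]
        ring
      have hn0 : (0:ℝ) ≤ n R := by simp only [hn]; positivity
      rw [h1]
      nlinarith
  have hTend2 : Tendsto (fun R : ℝ => (R - c) * n R + 2 * W) atTop (nhds (0 + 2 * W)) :=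
    hTend0.add tendsto_const_nhds
  have final : (1/2) * ∫ r in Set.Ioi c, n r ≤ 0 + 2 * W := by
    apply le_of_tendsto_of_tendsto hTend1 hTend2
    filter_upwards [eventually_ge_atTop c] with R hR
    exact key2 R hR
  have heq : ∫ r in Set.Ioi c, ‖u r‖^2 = ∫ r in Set.Ioi c, n r := by
    congr 1
    exact funext hneq
  rw [heq]
  linarith

/-- Hardy inequality absorbing the mass term.  All integrals are
expressed in the `r` variable: using `dr* = ((r²+a²)/Δ₋) dr`, the left-hand
side `∫ (Δ₋/(r²+a²)) |u|² dr*` becomes `∫ |u|² dr`, while the right-hand side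
`∫ |u'|² dr*` (with `' = d/dr*`) becomes `∫ (Δ₋/(r²+a²)) |du/dr|² dr`. -/
theorem stmt_5 (M l a rp : ℝ) (hM : 0 < M) (hl : 0 < l) (ha : |a| < l)
    (hrp : 0 < rp) (hroot : Dm M l a rp = 0)
    (hΔpos : ∀ r : ℝ, rp < r → 0 < Dm M l a r) :
    ∀ rcut : ℝ, rp ≤ rcut →
    ∀ u : ℝ → ℂ, ContDiff ℝ (⊤ : ℕ∞) u →
      Tendsto (fun r : ℝ => ‖u r‖ * Real.sqrt r) atTop (nhds 0) →
      IntegrableOn (fun r : ℝ => ‖u r‖^2) (Set.Ioi rcut) →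
      IntegrableOn (fun r : ℝ => (Dm M l a r / (r^2 + a^2)) * ‖deriv u r‖^2)
        (Set.Ioi rcut) →
      (1/(4*l^2)) * (∫ r in Set.Ioi rcut, ‖u r‖^2)
        ≤ ∫ r in Set.Ioi rcut, (Dm M l a r / (r^2 + a^2)) * ‖deriv u r‖^2 := by
  intro rcut hrc u hu hdecay hint1 hint2
  have hc0 : 0 < rcut := lt_of_lt_of_le hrp hrc
  set V : ℝ → ℝ := fun r => l^2 * (Dm M l a r / (r^2 + a^2)) with hV
  have hposden : ∀ r : ℝ, rcut ≤ r → (0:ℝ) < r^2 + a^2 := by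
    intro r hr
    have : (0:ℝ) < r := lt_of_lt_of_le hc0 hr
    positivity
  have hVcont : ContinuousOn V (Set.Ici rcut) := by
    have hDm : Continuous (fun r => Dm M l a r) := by
      unfold Dm
      fun_prop
    apply ContinuousOn.mul continuousOn_const
    apply ContinuousOn.div hDm.continuousOn (by fun_prop)
    intro r hr
    exact ne_of_gt (hposden r hr)
  have hVbd : ∀ r : ℝ, rcut ≤ r → (r - rcut)^2 ≤ V r := by
    intro r hr
    have hkey := key_bound_aux M l a rp hl hrp hroot hΔpos rcut hrc r hr
    have hpd := hposden r hr
    show (r - rcut)^2 ≤ l^2 * (Dm M l a r / (r^2 + a^2))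
    rw [← mul_div_assoc, le_div_iff₀ hpd]
    linarith
  have hint2' : IntegrableOn (fun r : ℝ => V r * ‖deriv u r‖^2) (Set.Ioi rcut) := by
    have h : IntegrableOn
        (fun r : ℝ => l^2 * ((Dm M l a r / (r^2 + a^2)) * ‖deriv u r‖^2))
        (Set.Ioi rcut) := hint2.const_mul (l^2)
    exact h.congr_fun (fun r _ => by show _ = V r * _; simp only [hV]; ring)
      measurableSet_Ioi
  have H := hardy_aux rcut hc0 u hu hdecay V hVcont hVbd hint1 hint2'
  have heq : ∫ r in Set.Ioi rcut, V r * ‖deriv u r‖^2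
      = l^2 * ∫ r in Set.Ioi rcut, (Dm M l a r / (r^2 + a^2)) * ‖deriv u r‖^2 := by
    rw [← integral_const_mul]
    congr 1
    funext r
    simp only [hV]
    ring
  rw [heq] at H
  have h4l : (0:ℝ) < 4 * l^2 := by positivity
  rw [div_mul_eq_mul_div, one_mul, div_le_iff₀ h4l]
  linarith
end

section
/- (Positivity of V₊ + V_α near the horizon, case α ≤ 1) If α ≤ 1, |a|l < r₊², |a|<l, then the inequality V₊(r) + V_α(r) ≥ C·(Δ₋/(r²+a²)²)·r² holds globally for r ≥ r₊, where V_α(r) = −(α/l²)·(Δ₋/(r²+a²)²)·(r² + Θ(α)a²) with Θ(α)=1 for α>0 and Θ(α)=0 for α≤0, and C>0 depends only on M, l, a, α. -/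
/-- The potential component V₊. -/
noncomputable def Vplus (M l a r : ℝ) : ℝ :=
  -(Dm M l a r)^2 * (3*r^2) / (r^2 + a^2)^4
    + Dm M l a r * (5*r^4/l^2 + 3*r^2*(1 + a^2/l^2) - 4*M*r + a^2) / (r^2 + a^2)^3

/-- The mass-term potential V_α, with Θ(α)=1 for α>0 and Θ(α)=0 for α≤0. -/
noncomputable def Valpha (M l a α r : ℝ) : ℝ :=
  -(α/l^2) * (Dm M l a r / (r^2 + a^2)^2) * (r^2 + (if 0 < α then 1 else 0) * a^2)

/-!
Factoring out `Δ₋/(r² + a²)²`, the sum `V₊ + V_α` is `(2r² - α(r² + Θ(α)a²))/l²` plus the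
remainder `(a²Δ₋ + 2Mr(r² - a²))/(r² + a²)²`, which is nonnegative once `r² ≥ a²`.
For `α ≤ 1` the first term is at least `(r² - a²)/l² = (1 - a²/r²) r²/l² ≥ (1 - a²/r₊²) r²/l²`,
and `|a| < l`, `|a| l < r₊²` give `a² < r₊²`.
-/

section KerrAdS

variable {M l a r : ℝ}

theorem Vplus_add_Valpha_eq (α : ℝ) (hl : l ≠ 0) (hS : r^2 + a^2 ≠ 0) :
    Vplus M l a r + Valpha M l a α r =
      (2*r^2 - α*(r^2 + (if 0 < α then 1 else 0) * a^2)) / l^2 * (Dm M l a r / (r^2 + a^2)^2)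
        + Dm M l a r * (a^2 * Dm M l a r + 2*M*r*(r^2 - a^2)) / (r^2 + a^2)^4 := by
  simp only [Vplus, Valpha, Dm]
  field_simp
  ring

theorem sq_sub_sq_le_two_mul_sq_sub_mass_term {α : ℝ} (hα : α ≤ 1) :
    r^2 - a^2 ≤ 2*r^2 - α*(r^2 + (if 0 < α then 1 else 0) * a^2) := by
  split_ifs <;> nlinarith [sq_nonneg r, sq_nonneg a]

theorem horizon_const_mul_sq_le {rp : ℝ} (hrp : 0 < rp) (hr : rp ≤ r) (hl : l ≠ 0) :
    (rp^2 - a^2) / (rp^2 * l^2) * r^2 ≤ (r^2 - a^2) / l^2 := by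
  have hr2 : rp^2 ≤ r^2 := pow_le_pow_left₀ hrp.le hr 2
  rw [div_mul_eq_mul_div, div_le_div_iff₀ (by positivity) (by positivity)]
  nlinarith [mul_nonneg (mul_nonneg (sq_nonneg a) (sq_nonneg l)) (sub_nonneg.mpr hr2)]

theorem Vplus_remainder_nonneg (hM : 0 ≤ M) (hr : 0 ≤ r) (har : a^2 ≤ r^2)
    (hD : 0 ≤ Dm M l a r) :
    0 ≤ Dm M l a r * (a^2 * Dm M l a r + 2*M*r*(r^2 - a^2)) / (r^2 + a^2)^4 := by
  have : 0 ≤ r^2 - a^2 := sub_nonneg.mpr har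
  positivity

end KerrAdS

theorem stmt_11_general (M l a rp α : ℝ) (hM : 0 < M) (hl : 0 < l) (ha : |a| < l)
    (hHR : |a| * l < rp^2) (hrp : 0 < rp) (hα : α ≤ 1)
    (hΔ : ∀ r : ℝ, rp ≤ r → 0 ≤ Dm M l a r) :
    ∃ C : ℝ, 0 < C ∧ ∀ r : ℝ, rp ≤ r →
      C * (Dm M l a r / (r^2 + a^2)^2) * r^2 ≤ Vplus M l a r + Valpha M l a α r := by
  have ha2 : a^2 < rp^2 := by
    nlinarith [sq_abs a, mul_le_mul_of_nonneg_left ha.le (abs_nonneg a)]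
  refine ⟨(rp^2 - a^2) / (rp^2 * l^2), div_pos (by linarith) (by positivity), fun r hr => ?_⟩
  have hr0 : 0 < r := hrp.trans_le hr
  have har : a^2 ≤ r^2 := ha2.le.trans (pow_le_pow_left₀ hrp.le hr 2)
  have hD : 0 ≤ Dm M l a r / (r^2 + a^2)^2 := div_nonneg (hΔ r hr) (by positivity)
  rw [Vplus_add_Valpha_eq α hl.ne' (by positivity)]
  calc (rp^2 - a^2) / (rp^2 * l^2) * (Dm M l a r / (r^2 + a^2)^2) * r^2
      = (rp^2 - a^2) / (rp^2 * l^2) * r^2 * (Dm M l a r / (r^2 + a^2)^2) := by ring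
    _ ≤ (r^2 - a^2) / l^2 * (Dm M l a r / (r^2 + a^2)^2) := by
      gcongr ?_ * _; exact horizon_const_mul_sq_le hrp hr hl.ne'
    _ ≤ (2*r^2 - α*(r^2 + (if 0 < α then 1 else 0) * a^2)) / l^2
          * (Dm M l a r / (r^2 + a^2)^2) := by
      gcongr ?_ / _ * _; exact sq_sub_sq_le_two_mul_sq_sub_mass_term hα
    _ ≤ _ := le_add_of_nonneg_right (Vplus_remainder_nonneg hM.le hr0.le har (hΔ r hr))

/-- for α ≤ 1, the global positivity estimate
V₊ + V_α ≥ C (Δ₋/(r²+a²)²) r² for r ≥ r₊. -/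
theorem stmt_11 (M l a rp α : ℝ) (hM : 0 < M) (hl : 0 < l) (ha : |a| < l)
    (hHR : |a| * l < rp^2) (hrp : 0 < rp) (hα : α ≤ 1)
    (hroot : Dm M l a rp = 0)
    (hΔ : ∀ r : ℝ, rp ≤ r → 0 ≤ Dm M l a r) :
    ∃ C : ℝ, 0 < C ∧ ∀ r : ℝ, rp ≤ r →
      C * (Dm M l a r / (r^2 + a^2)^2) * r^2 ≤ Vplus M l a r + Valpha M l a α r :=
  stmt_11_general M l a rp α hM hl ha hHR hrp hα hΔ
end

section
/- (Global estimate with borrowed Hardy term) For |a|<l, |a|l<r₊², α<9/4 and assuming (α ≤ 1) or (1<α≤2 and |a|<l/2), the inequality V₊(r) + V_α(r) + (1/(4l²))·Δ₋/(r²+a²) ≥ C·(Δ₋/(r²+a²)²)·r² holds for all r ≥ r₊ with C>0 depending only on M, l, a, α. -/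
/-!
With `C = 1/(16 l²)` the difference of the two sides is `Δ₋ K / (l² (r² + a²)⁴)`, where `K`
is a polynomial in `r², a², l²` that is linear in `l² Δ₋` and in `α (r² + Θ a²)`.
On `r ≥ r₊` we have `0 ≤ l² Δ₋ ≤ (r² + a²)(l² + r²)` (the gap is `2 M l² r`) and
`α (r² + Θ a²) ≤ κ (r² + a²)` with `κ = 1` or `κ = 2`. Substituting these extreme values
leaves quartic forms in `(r², a²)` that are nonnegative because `a² < r²` (from `|a| l < r₊²`)
and `a² < l²`, resp. `4 a² < l²` and `2 a² < r²` when `1 < α ≤ 2`.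
-/

/-- The numerator `K`, written in `x = r²`, `b = a²`, `L = l²`, `D = l² Δ₋` and
`m = α (r² + Θ(α) a²)`. -/
noncomputable def remainderPoly (x b L D m : ℝ) : ℝ :=
  (x + b) * (3*x^2 + b*x + L*(x - b)) + (x + b)^3/4 - m*(x + b)^2 - (x - 2*b)*D
    - x*(x + b)^2/16

theorem remainderPoly_nonneg_of_le_one {x b L D m : ℝ} (hb : 0 ≤ b) (hbx : b < x)
    (hbL : b ≤ L) (hD : 0 ≤ D) (hDle : D ≤ (x + b)*(L + x)) (hm : m ≤ x + b) :
    0 ≤ remainderPoly x b L D m := by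
  have hs : 0 ≤ x + b := by linarith
  have hmterm : m*(x + b)^2 ≤ (x + b)^3 := by nlinarith [sq_nonneg (x + b)]
  unfold remainderPoly
  -- the sign of `x - 2b` decides which bound on `D` is the relevant one
  rcases le_or_gt (2*b) x with h | h
  · have := mul_le_mul_of_nonneg_left hDle (sub_nonneg.2 h)
    nlinarith [mul_nonneg hs (mul_nonneg hb (sub_nonneg.2 hbL)), mul_nonneg hs (mul_nonneg hb hs),
      mul_nonneg hs (sq_nonneg x)]
  · have := mul_nonneg hD (sub_nonneg.2 h.le)
    nlinarith [mul_nonneg hs (mul_nonneg hb (sub_nonneg.2 hbx.le)),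
      mul_nonneg hs (mul_nonneg (sub_nonneg.2 hbL) (sub_nonneg.2 hbx.le)),
      mul_nonneg hs (mul_nonneg (sub_nonneg.2 hbx.le) (sub_nonneg.2 hbx.le))]

theorem remainderPoly_nonneg_of_le_two {x b L D m : ℝ} (hb : 0 ≤ b) (hbx : 2*b < x)
    (hbL : 4*b < L) (hDle : D ≤ (x + b)*(L + x)) (hm : m ≤ 2*(x + b)) :
    0 ≤ remainderPoly x b L D m := by
  have hs : 0 ≤ x + b := by linarith
  have hmterm : m*(x + b)^2 ≤ 2*(x + b)^3 := by nlinarith [sq_nonneg (x + b)]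
  have := mul_le_mul_of_nonneg_left hDle (sub_nonneg.2 hbx.le)
  unfold remainderPoly
  nlinarith [mul_nonneg hs (mul_nonneg hb (sub_nonneg.2 hbL.le)),
    mul_nonneg hs (sq_nonneg (2*x - 3*b)), mul_nonneg hs (mul_nonneg hb hb)]

theorem mul_add_ite_le {α κ x b : ℝ} (hx : 0 ≤ x) (hb : 0 ≤ b) (hκ : 0 ≤ κ) (hα : α ≤ κ) :
    α * (x + (if 0 < α then 1 else 0) * b) ≤ κ * (x + b) := by
  split_ifs with h
  · nlinarith
  · nlinarith

theorem remainderPoly_nonneg {l a r α D : ℝ} (ha : |a| < l) (har : |a| * l < r^2)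
    (hcase : α ≤ 1 ∨ (1 < α ∧ α ≤ 2 ∧ |a| < l/2))
    (hD : 0 ≤ D) (hDle : D ≤ (r^2 + a^2) * (l^2 + r^2)) :
    0 ≤ remainderPoly (r^2) (a^2) (l^2) D (α * (r^2 + (if 0 < α then 1 else 0) * a^2)) := by
  have hb : 0 ≤ a^2 := sq_nonneg a
  have hbx : a^2 < r^2 := by
    nlinarith [sq_abs a, mul_le_mul_of_nonneg_left ha.le (abs_nonneg a)]
  rcases hcase with hα | ⟨-, hα, ha2⟩
  · refine remainderPoly_nonneg_of_le_one hb hbx ?_ hD (by linarith) ?_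
    · nlinarith [sq_abs a, abs_nonneg a]
    · simpa using mul_add_ite_le (sq_nonneg r) hb zero_le_one hα
  · refine remainderPoly_nonneg_of_le_two hb ?_ ?_ (by linarith)
      (mul_add_ite_le (sq_nonneg r) hb zero_le_two hα)
    · nlinarith [sq_abs a, mul_le_mul_of_nonneg_left ha2.le (abs_nonneg a)]
    · nlinarith [sq_abs a, mul_pos (by linarith [abs_nonneg a] : 0 < l - 2*|a|)
        (by linarith [abs_nonneg a] : 0 < l + 2*|a|)]

theorem mul_Dm_le {M l a r : ℝ} (hl : l ≠ 0) (hMr : 0 ≤ M * r) :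
    l^2 * Dm M l a r ≤ (r^2 + a^2) * (l^2 + r^2) := by
  have h : l^2 * Dm M l a r = (r^2 + a^2) * (l^2 + r^2) - 2 * l^2 * (M * r) := by
    unfold Dm; field_simp
  nlinarith [sq_nonneg l]

theorem potential_add_hardy_sub_eq (M l a α r : ℝ) (hl : l ≠ 0) (hs : r^2 + a^2 ≠ 0) :
    Vplus M l a r + Valpha M l a α r + (1/(4*l^2)) * (Dm M l a r / (r^2 + a^2))
      - 1/(16*l^2) * (Dm M l a r / (r^2 + a^2)^2) * r^2
    = Dm M l a r * remainderPoly (r^2) (a^2) (l^2) (l^2 * Dm M l a r)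
        (α * (r^2 + (if 0 < α then 1 else 0) * a^2)) / (l^2 * (r^2 + a^2)^4) := by
  unfold Vplus Valpha remainderPoly Dm
  field_simp
  ring

theorem stmt_12_general (M l a rp α : ℝ) (hM : 0 < M) (hl : 0 < l) (ha : |a| < l)
    (hHR : |a| * l < rp^2) (hrp : 0 < rp)
    (hcase : α ≤ 1 ∨ (1 < α ∧ α ≤ 2 ∧ |a| < l/2))
    (hΔ : ∀ r : ℝ, rp ≤ r → 0 ≤ Dm M l a r) :
    ∃ C : ℝ, 0 < C ∧ ∀ r : ℝ, rp ≤ r →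
      C * (Dm M l a r / (r^2 + a^2)^2) * r^2
        ≤ Vplus M l a r + Valpha M l a α r
          + (1/(4*l^2)) * (Dm M l a r / (r^2 + a^2)) := by
  refine ⟨1/(16*l^2), by positivity, fun r hr => ?_⟩
  have hr0 : 0 < r := hrp.trans_le hr
  have hD : 0 ≤ Dm M l a r := hΔ r hr
  have hK := remainderPoly_nonneg (α := α) ha (hHR.trans_le (pow_le_pow_left₀ hrp.le hr 2))
    hcase (by positivity) (mul_Dm_le hl.ne' (mul_pos hM hr0).le)
  have hs : 0 < r^2 + a^2 := by positivity
  rw [← sub_nonneg, potential_add_hardy_sub_eq M l a α r hl.ne' hs.ne']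
  exact div_nonneg (mul_nonneg hD hK) (by positivity)

/-- global estimate with the borrowed Hardy term: under the
stated parameter restrictions,
V₊ + V_α + (1/(4l²)) Δ₋/(r²+a²) ≥ C (Δ₋/(r²+a²)²) r² for all r ≥ r₊. -/
theorem stmt_12 (M l a rp α : ℝ) (hM : 0 < M) (hl : 0 < l) (ha : |a| < l)
    (hHR : |a| * l < rp^2) (hrp : 0 < rp) (hα : α < 9/4)
    (hcase : α ≤ 1 ∨ (1 < α ∧ α ≤ 2 ∧ |a| < l/2))
    (hroot : Dm M l a rp = 0)
    (hΔ : ∀ r : ℝ, rp ≤ r → 0 ≤ Dm M l a r) :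
    ∃ C : ℝ, 0 < C ∧ ∀ r : ℝ, rp ≤ r →
      C * (Dm M l a r / (r^2 + a^2)^2) * r^2
        ≤ Vplus M l a r + Valpha M l a α r
          + (1/(4*l^2)) * (Dm M l a r / (r^2 + a^2)) :=
  stmt_12_general M l a rp α hM hl ha hHR hrp hcase hΔ
end

section
/- (Mixed current identity) With g, h real C² functions and u a C² solution of u'' + (ω²−V)u = H, define Q^{g,h} = g(|u'|² + (ω²−V)|u|²) + h Re(u'ū) − (1/2)h'|u|². Then (Q^{g,h})' = |u'|²(g'+h) + ω²(g'−h)|u|² + |u|²(−g'V − gV' + Vh − (1/2)h'') + 2g Re(u'H̄) + h Re(uH̄). -/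
/-!
Since `Re (z * conj w) = ⟪w, z⟫_ℝ` on `ℂ`, the identity holds verbatim for `u` with values in any
real inner product space. There it is the product rule applied to `Q`, together with
`(‖u'‖²)' = 2⟪u', u''⟫` and the substitution `u'' = -(ω² - V) • u + H`.
-/

open RealInnerProductSpace

section MixedCurrent

variable {F : Type*} [NormedAddCommGroup F] [InnerProductSpace ℝ F]

/-- The paper's `Q^{g,h}`. -/
noncomputable def mixedCurrent (ω : ℝ) (V g h h' : ℝ → ℝ) (u u' : ℝ → F) (t : ℝ) : ℝ :=
  g t * (‖u' t‖ ^ 2 + (ω ^ 2 - V t) * ‖u t‖ ^ 2) + h t * ⟪u t, u' t⟫ - 1 / 2 * h' t * ‖u t‖ ^ 2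

theorem hasDerivAt_mixedCurrent {ω s : ℝ} {V g h h' : ℝ → ℝ} {u u' H : ℝ → F}
    {V' g' h'' : ℝ} (hV : HasDerivAt V V' s) (hg : HasDerivAt g g' s)
    (hh : HasDerivAt h (h' s) s) (hh' : HasDerivAt h' h'' s) (hu : HasDerivAt u (u' s) s)
    (hode : HasDerivAt u' (-(ω ^ 2 - V s) • u s + H s) s) :
    HasDerivAt (mixedCurrent ω V g h h' u u')
      (‖u' s‖ ^ 2 * (g' + h s) + ω ^ 2 * (g' - h s) * ‖u s‖ ^ 2
        + ‖u s‖ ^ 2 * (-(g' * V s) - g s * V' + V s * h s - 1 / 2 * h'')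
        + 2 * g s * ⟪H s, u' s⟫ + h s * ⟪H s, u s⟫) s := by
  have hKinetic := hode.norm_sq
  have hPotential := ((hasDerivAt_const s (ω ^ 2)).sub hV).mul hu.norm_sq
  have hCross := hu.inner ℝ hode
  have hQ := ((hg.mul (hKinetic.add hPotential)).add (hh.mul hCross)).sub
    (((hasDerivAt_const s (1 / 2 : ℝ)).mul hh').mul hu.norm_sq)
  refine hQ.congr_deriv ?_
  simp only [Pi.add_apply, Pi.sub_apply, Pi.mul_apply, inner_add_right, inner_smul_right,
    real_inner_self_eq_norm_sq]
  rw [real_inner_comm (u s) (u' s), real_inner_comm (u' s) (H s), real_inner_comm (u s) (H s)]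
  ring

end MixedCurrent

theorem stmt_16_general (ω : ℝ) (I : Set ℝ)
    (V V' g g' h h' h'' : ℝ → ℝ) (H u u' : ℝ → ℂ)
    (hV : ∀ s ∈ I, HasDerivAt V (V' s) s)
    (hg : ∀ s ∈ I, HasDerivAt g (g' s) s)
    (hh : ∀ s ∈ I, HasDerivAt h (h' s) s)
    (hh' : ∀ s ∈ I, HasDerivAt h' (h'' s) s)
    (hu : ∀ s ∈ I, HasDerivAt u (u' s) s)
    (hode : ∀ s ∈ I, HasDerivAt u' (-((ω^2 - V s : ℝ) : ℂ) * u s + H s) s) :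
    ∀ s ∈ I,
      HasDerivAt (fun t =>
          g t * (‖u' t‖^2 + (ω^2 - V t) * ‖u t‖^2)
            + h t * (u' t * (starRingEnd ℂ) (u t)).re
            - (1/2) * h' t * ‖u t‖^2)
        (‖u' s‖^2 * (g' s + h s)
          + ω^2 * (g' s - h s) * ‖u s‖^2
          + ‖u s‖^2 * (-(g' s * V s) - g s * V' s + V s * h s - (1/2) * h'' s)
          + 2 * g s * (u' s * (starRingEnd ℂ) (H s)).re
          + h s * (u s * (starRingEnd ℂ) (H s)).re) s := by
  intro s hs
  have hode_smul : HasDerivAt u' (-(ω ^ 2 - V s) • u s + H s) s := by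
    simpa only [Complex.real_smul, Complex.ofReal_neg] using hode s hs
  have hQ := hasDerivAt_mixedCurrent (hV s hs) (hg s hs) (hh s hs) (hh' s hs) (hu s hs) hode_smul
  unfold mixedCurrent at hQ
  simpa only [Complex.inner] using hQ

/-- the mixed current identity for
Q^{g,h} = g(|u'|² + (ω²−V)|u|²) + h Re(u'ū) − (1/2)h'|u|²:
(Q^{g,h})' = |u'|²(g'+h) + ω²(g'−h)|u|²
  + |u|²(−g'V − gV' + Vh − (1/2)h'') + 2g Re(u'H̄) + h Re(uH̄). -/
theorem stmt_16 (ω : ℝ) (I : Set ℝ) (hI : IsOpen I)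
    (V V' g g' h h' h'' : ℝ → ℝ) (H u u' : ℝ → ℂ)
    (hV : ∀ s ∈ I, HasDerivAt V (V' s) s)
    (hg : ∀ s ∈ I, HasDerivAt g (g' s) s)
    (hh : ∀ s ∈ I, HasDerivAt h (h' s) s)
    (hh' : ∀ s ∈ I, HasDerivAt h' (h'' s) s)
    (hu : ∀ s ∈ I, HasDerivAt u (u' s) s)
    (hode : ∀ s ∈ I, HasDerivAt u' (-((ω^2 - V s : ℝ) : ℂ) * u s + H s) s) :
    ∀ s ∈ I,
      HasDerivAt (fun t =>
          g t * (‖u' t‖^2 + (ω^2 - V t) * ‖u t‖^2)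
            + h t * (u' t * (starRingEnd ℂ) (u t)).re
            - (1/2) * h' t * ‖u t‖^2)
        (‖u' s‖^2 * (g' s + h s)
          + ω^2 * (g' s - h s) * ‖u s‖^2
          + ‖u s‖^2 * (-(g' s * V s) - g s * V' s + V s * h s - (1/2) * h'' s)
          + 2 * g s * (u' s * (starRingEnd ℂ) (H s)).re
          + h s * (u s * (starRingEnd ℂ) (H s)).re) s :=
  stmt_16_general ω I V V' g g' h h' h'' H u u' hV hg hh hh' hu hode
end
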